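/- If Φ is an equilibrium-free flow on a closed Riemannian manifold possessing a generalized symmetry with multiplier of absolute value different from 1, then Φ has no periodic orbit, and consequently no compact invariant set of Φ is uniformly hyperbolic; in particular Φ is not an Anosov flow. -/

import Mathlib

/-!
A generalized symmetry `R` with multiplier `μ` conjugates `Φ_t` to `Φ_{μ t}`, so it maps an orbit of
period `T` to one of period `|μ| T`. After replacing `R` by `R⁻¹` we may assume `|μ| < 1`; the
iterates of a periodic point then form a sequence of periodic points whose periods tend to `0`.
At a cluster point `q` of that sequence, no `Φ_t q` can be separated from `q` by disjoint
neighbourhoods; since a manifold is locally Hausdorff this forces `Φ_t q = q` for small `t`, hence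
for all `t`: `q` is an equilibrium. The statements about hyperbolic sets then follow from the Anosov Closing Lemma.
-/

open Manifold Filter Topology

theorem OpenPartialHomeomorph.eq_of_not_disjoint_nhds {α H : Type*} [TopologicalSpace α]
    [TopologicalSpace H] [T2Space H] (e : OpenPartialHomeomorph α H) {y z : α}
    (hy : y ∈ e.source) (hz : z ∈ e.source) (h : ¬Disjoint (𝓝 y) (𝓝 z)) : y = z := by
  have : (𝓝 y ⊓ 𝓝 z).NeBot := ⟨mt disjoint_iff.mpr h⟩
  refine e.injOn hy hz (tendsto_nhds_unique (f := e) (l := 𝓝 y ⊓ 𝓝 z) ?_ ?_)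
  · exact (e.continuousAt hy).mono_left inf_le_left
  · exact (e.continuousAt hz).mono_left inf_le_right

theorem AddSubgroup.eq_top_of_mem_nhds_zero {G : Type*} [AddGroup G] [TopologicalSpace G]
    [SeparatelyContinuousAdd G] [ConnectedSpace G] (H : AddSubgroup G)
    (h : (H : Set G) ∈ 𝓝 0) : H = ⊤ := by
  have hopen := H.isOpen_of_mem_nhds h
  exact SetLike.coe_injective <|
    IsClopen.eq_univ ⟨H.isClosed_of_isOpen hopen, hopen⟩ ⟨0, H.zero_mem⟩

namespace Flow

section Periods

variable {τ α : Type*} [TopologicalSpace τ] [AddGroup τ] [TopologicalSpace α]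

def periods (ϕ : Flow τ α) (x : α) : AddSubgroup τ :=
  letI := ϕ.toAddAction
  AddAction.stabilizer τ x

@[simp]
theorem mem_periods {ϕ : Flow τ α} {x : α} {t : τ} : t ∈ ϕ.periods x ↔ ϕ t x = x :=
  Iff.rfl

theorem map_add_period {ϕ : Flow τ α} {x : α} {s : τ} (hs : s ∈ ϕ.periods x) (t : τ) :
    ϕ (t + s) x = ϕ t x := by
  rw [map_add, mem_periods.mp hs]

end Periods

variable {α : Type*} [TopologicalSpace α] (ϕ : Flow ℝ α)

def IsGeneralizedSymmetry (f : α → α) (c : ℝ) : Prop :=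
  ∀ t x, f (ϕ t x) = ϕ (c * t) (f x)

namespace IsGeneralizedSymmetry

variable {ϕ} {f : α → α} {c : ℝ}

theorem iterate (h : IsGeneralizedSymmetry ϕ f c) (k : ℕ) :
    IsGeneralizedSymmetry ϕ f^[k] (c ^ k) := by
  induction k with
  | zero => simp [IsGeneralizedSymmetry]
  | succ k ih =>
    intro t x
    rw [Function.iterate_succ_apply', Function.iterate_succ_apply', ih, h, pow_succ', mul_assoc]

theorem symm {e : α ≃ α} (h : IsGeneralizedSymmetry ϕ e c) (hc : c ≠ 0) :
    IsGeneralizedSymmetry ϕ e.symm c⁻¹ := by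
  intro t x
  apply e.injective
  rw [h, Equiv.apply_symm_apply, Equiv.apply_symm_apply, mul_inv_cancel_left₀ hc]

theorem mul_mem_periods (h : IsGeneralizedSymmetry ϕ f c) {x : α} {T : ℝ}
    (hT : T ∈ ϕ.periods x) : c * T ∈ ϕ.periods (f x) := by
  rw [mem_periods, ← h, mem_periods.mp hT]

end IsGeneralizedSymmetry

/-- `ϕ t (x i) = ϕ (t mod τ i) (x i)`, and `t mod τ i → 0`. -/
theorem tendsto_apply_of_periods_tendsto_zero {ι : Type*} {l : Filter ι} {x : ι → α}
    {τ : ι → ℝ} {q : α} (hτ : ∀ i, τ i ∈ ϕ.periods (x i)) (hτpos : ∀ i, 0 < τ i)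
    (hτ0 : Tendsto τ l (𝓝 0)) (hx : Tendsto x l (𝓝 q)) (t : ℝ) :
    Tendsto (fun i ↦ ϕ t (x i)) l (𝓝 q) := by
  set r : ι → ℝ := fun i ↦ toIcoMod (hτpos i) 0 t
  have hr : Tendsto r l (𝓝 0) := by
    exact tendsto_of_tendsto_of_tendsto_of_le_of_le tendsto_const_nhds hτ0
      (fun i ↦ (toIcoMod_mem_Ico' (hτpos i) t).1) (fun i ↦ (toIcoMod_mem_Ico' (hτpos i) t).2.le)
  have hϕ : ∀ i, ϕ t (x i) = ϕ (r i) (x i) := fun i ↦ by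
    have hmem : t - r i ∈ ϕ.periods (x i) := by
      rw [self_sub_toIcoMod]
      exact AddSubgroup.zsmul_mem _ (hτ i) _
    rw [← map_add_period hmem (r i), add_sub_cancel]
  have hlim := (ϕ.cont'.tendsto (0, q)).comp (hr.prodMk_nhds hx)
  rw [show Function.uncurry ϕ.toFun (0, q) = q from ϕ.map_zero_apply q] at hlim
  exact hlim.congr fun i ↦ (hϕ i).symm

theorem exists_forall_not_disjoint_nhds_apply [CompactSpace α] {x : ℕ → α} {τ : ℕ → ℝ}
    (hτ : ∀ k, τ k ∈ ϕ.periods (x k)) (hτ0 : ∀ k, τ k ≠ 0) (hτlim : Tendsto τ atTop (𝓝 0)) :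
    ∃ q, ∀ t, ¬Disjoint (𝓝 (ϕ t q)) (𝓝 q) := by
  obtain ⟨q, -, hq⟩ := isCompact_univ.exists_mapClusterPt (f := atTop) (u := x) (by simp)
  obtain ⟨U, hU, hxU⟩ := mapClusterPt_iff_ultrafilter.mp hq
  refine ⟨q, fun t hdisj ↦ ?_⟩
  have habs : Tendsto (fun k ↦ |τ k|) atTop (𝓝 0) := by simpa using hτlim.abs
  have hto_q := ϕ.tendsto_apply_of_periods_tendsto_zero (fun k ↦ abs_mem_iff.mpr (hτ k))
    (fun k ↦ abs_pos.mpr (hτ0 k)) (habs.mono_left hU) hxU t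
  have hto_ϕq := ((ϕ.continuous_toFun t).tendsto q).comp hxU
  exact (U.neBot.map _).ne (disjoint_self.mp (hdisj.mono hto_ϕq hto_q))

theorem periods_eq_top_of_forall_not_disjoint_nhds (H : Type*) [TopologicalSpace H] [T2Space H]
    [ChartedSpace H α] {q : α} (hq : ∀ t, ¬Disjoint (𝓝 (ϕ t q)) (𝓝 q)) :
    ϕ.periods q = ⊤ := by
  let e := chartAt H q
  have hnear : ∀ᶠ t in 𝓝 (0 : ℝ), ϕ t q ∈ e.source := by
    have hcont : ContinuousAt (fun t ↦ ϕ t q) 0 :=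
      (ϕ.continuous continuous_id continuous_const).continuousAt
    exact hcont.eventually_mem (e.open_source.mem_nhds (by simp [ϕ.map_zero_apply, e]))
  refine AddSubgroup.eq_top_of_mem_nhds_zero _ (hnear.mono fun t ht ↦ ?_)
  exact e.eq_of_not_disjoint_nhds ht (mem_chart_source H q) (hq t)

theorem periods_eq_bot_of_isGeneralizedSymmetry (H : Type*) [TopologicalSpace H] [T2Space H]
    [ChartedSpace H α] [CompactSpace α] (hfree : ∀ p, ϕ.periods p ≠ ⊤) {e : α ≃ α} {c : ℝ}
    (he : IsGeneralizedSymmetry ϕ e c) (hc0 : c ≠ 0) (hc1 : |c| ≠ 1) (p : α) :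
    ϕ.periods p = ⊥ := by
  obtain ⟨f, d, hf, hd0, hd1⟩ :
      ∃ (f : α → α) (d : ℝ), IsGeneralizedSymmetry ϕ f d ∧ d ≠ 0 ∧ |d| < 1 := by
    rcases hc1.lt_or_gt with hlt | hgt
    · exact ⟨e, c, he, hc0, hlt⟩
    · refine ⟨e.symm, c⁻¹, he.symm hc0, inv_ne_zero hc0, ?_⟩
      rwa [abs_inv, inv_lt_one₀ (by positivity)]
  rw [AddSubgroup.eq_bot_iff_forall]
  by_contra! ⟨T, hT, hT0⟩
  have hlim : Tendsto (fun k : ℕ ↦ d ^ k * T) atTop (𝓝 0) := by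
    simpa using (tendsto_pow_atTop_nhds_zero_of_abs_lt_one hd1).mul_const T
  obtain ⟨q, hq⟩ := ϕ.exists_forall_not_disjoint_nhds_apply
    (fun k ↦ (hf.iterate k).mul_mem_periods hT) (fun k ↦ by positivity) hlim
  exact hfree q (ϕ.periods_eq_top_of_forall_not_disjoint_nhds H hq)

end Flow

theorem no_periodic_orbits_and_no_hyperbolic_sets_general
    {n : ℕ} {P : Type*} [TopologicalSpace P] [CompactSpace P]
    [ChartedSpace (EuclideanSpace ℝ (Fin n)) P]
    (Φ : ℝ → P → P)
    (hΦ0 : Φ 0 = id)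
    (hΦadd : ∀ s t : ℝ, Φ (s + t) = Φ s ∘ Φ t)
    (hΦcont : Continuous (fun q : ℝ × P => Φ q.1 q.2))
    (hfree : ∀ p : P, ∃ t : ℝ, Φ t p ≠ p)  -- equilibrium-free
    (R : Diffeomorph (𝓡 n) (𝓡 n) P P (⊤ : ℕ∞)) (μ : ℝ) (hμ0 : μ ≠ 0) (hμ1 : |μ| ≠ 1)
    (hR : ∀ (t : ℝ) (p : P), R (Φ t p) = Φ (μ * t) (R p))
    (UniformlyHyperbolic : Set P → Prop)
    -- Anosov Closing Lemma, taken as a hypothesis: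
    (closing : ∀ Λ : Set P, IsCompact Λ → (∀ t : ℝ, Φ t '' Λ ⊆ Λ) →
      UniformlyHyperbolic Λ →
      ∃ p ∈ Λ, ∃ T : ℝ, 0 < T ∧ Φ T p = p) :
    -- Φ has no periodic orbit
    (¬ ∃ (p : P) (T : ℝ), 0 < T ∧ Φ T p = p) ∧
    -- no compact invariant set is uniformly hyperbolic
    (∀ Λ : Set P, IsCompact Λ → (∀ t : ℝ, Φ t '' Λ ⊆ Λ) → ¬ UniformlyHyperbolic Λ) ∧
    -- in particular, Φ is not Anosov
    ¬ UniformlyHyperbolic (Set.univ : Set P) := by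
  let ϕ : Flow ℝ P :=
    ⟨Φ, hΦcont, fun s t x ↦ congrFun (hΦadd s t) x, fun x ↦ congrFun hΦ0 x⟩
  have hno_eq : ∀ p, ϕ.periods p ≠ ⊤ := fun p htop ↦ by
    obtain ⟨t, ht⟩ := hfree p
    exact ht (Flow.mem_periods.mp (htop ▸ AddSubgroup.mem_top t))
  have hbot := ϕ.periods_eq_bot_of_isGeneralizedSymmetry (EuclideanSpace ℝ (Fin n)) hno_eq
    (e := R.toEquiv) hR hμ0 hμ1
  have hnoper : ¬ ∃ (p : P) (T : ℝ), 0 < T ∧ Φ T p = p := fun ⟨p, T, hT, hTp⟩ ↦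
    hT.ne' <| (AddSubgroup.mem_bot).mp (hbot p ▸ Flow.mem_periods.mpr hTp)
  have hnohyp : ∀ Λ : Set P, IsCompact Λ → (∀ t : ℝ, Φ t '' Λ ⊆ Λ) → ¬ UniformlyHyperbolic Λ :=
    fun Λ hΛ hinv hhyp ↦
      let ⟨p, _, T, hT, hTp⟩ := closing Λ hΛ hinv hhyp
      hnoper ⟨p, T, hT, hTp⟩
  exact ⟨hnoper, hnohyp, hnohyp _ isCompact_univ fun _ ↦ Set.subset_univ _⟩

/-- Let `Φ` be an equilibrium-free flow on a closed Riemannian manifold `P`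
possessing a generalized symmetry `R` with multiplier `μ`, `|μ| ≠ 1`. Let
`UniformlyHyperbolic : Set P → Prop` be any notion of uniform hyperbolicity for compact
invariant sets of `Φ` satisfying the Anosov Closing Lemma (every uniformly hyperbolic compact
invariant set contains a point on a non-stationary periodic orbit). Then `Φ` has no periodic
orbit, no compact invariant set of `Φ` is uniformly hyperbolic, and in particular `Φ` is not
an Anosov flow (the whole manifold is not uniformly hyperbolic). -/
theorem no_periodic_orbits_and_no_hyperbolic_sets
    {n : ℕ} {P : Type*} [TopologicalSpace P] [CompactSpace P]
    [ChartedSpace (EuclideanSpace ℝ (Fin n)) P]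
    [IsManifold (𝓡 n) (⊤ : ℕ∞) P]
    (Φ : ℝ → P → P)
    (hΦ0 : Φ 0 = id)
    (hΦadd : ∀ s t : ℝ, Φ (s + t) = Φ s ∘ Φ t)
    (hΦcont : Continuous (fun q : ℝ × P => Φ q.1 q.2))
    (hfree : ∀ p : P, ∃ t : ℝ, Φ t p ≠ p)  -- equilibrium-free
    (R : Diffeomorph (𝓡 n) (𝓡 n) P P (⊤ : ℕ∞)) (μ : ℝ) (hμ0 : μ ≠ 0) (hμ1 : |μ| ≠ 1)
    (hR : ∀ (t : ℝ) (p : P), R (Φ t p) = Φ (μ * t) (R p))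
    (UniformlyHyperbolic : Set P → Prop)
    -- Anosov Closing Lemma, taken as a hypothesis:
    (closing : ∀ Λ : Set P, IsCompact Λ → (∀ t : ℝ, Φ t '' Λ ⊆ Λ) →
      UniformlyHyperbolic Λ →
      ∃ p ∈ Λ, ∃ T : ℝ, 0 < T ∧ Φ T p = p) :
    -- Φ has no periodic orbit
    (¬ ∃ (p : P) (T : ℝ), 0 < T ∧ Φ T p = p) ∧
    -- no compact invariant set is uniformly hyperbolic
    (∀ Λ : Set P, IsCompact Λ → (∀ t : ℝ, Φ t '' Λ ⊆ Λ) → ¬ UniformlyHyperbolic Λ) ∧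
    -- in particular, Φ is not Anosov
    ¬ UniformlyHyperbolic (Set.univ : Set P) :=
  no_periodic_orbits_and_no_hyperbolic_sets_general Φ hΦ0 hΦadd hΦcont hfree R μ hμ0 hμ1 hR
    UniformlyHyperbolic closing
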